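/- arXiv:2310.14575 — 3 statements merged into one kernel-verified Lean document; each statement's English description precedes it below -/
import Mathlib

section
/- Let H be a finite simple graph whose vertex set is {a} ∪ B ∪ C where a, B, C are pairwise disjoint, B is nonempty, all edges are either between a and B or between B and C, a is adjacent to every vertex of B, and every vertex of H (including a) has degree at least 3. Then H contains a 6-cycle passing through a. -/
theorem six_cycle_through_apex_min_degree {V : Type*} [Fintype V]
    (G : SimpleGraph V) [DecidableRel G.Adj]
    (a : V) (B C : Set V)
    (haB : a ∉ B) (haC : a ∉ C) (hBC : Disjoint B C)
    (hBne : B.Nonempty)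
    (hcover : ∀ v : V, v = a ∨ v ∈ B ∨ v ∈ C)
    (hedges : ∀ u v : V, G.Adj u v →
      (u = a ∧ v ∈ B) ∨ (u ∈ B ∧ v = a) ∨ (u ∈ B ∧ v ∈ C) ∨ (u ∈ C ∧ v ∈ B))
    (hadjB : ∀ b ∈ B, G.Adj a b)
    (hdeg : ∀ v : V, 3 ≤ G.degree v) :
    ∃ w : G.Walk a a, w.IsCycle ∧ w.length = 6 := by
  classical
  -- Lemma 1: every b ∈ B has a neighbor in C avoiding any given vertex x
  have lem1 : ∀ b ∈ B, ∀ x : V, ∃ c ∈ C, c ≠ x ∧ G.Adj b c := by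
    intro b hb x
    have hcard : 1 ≤ ((G.neighborFinset b).erase a |>.erase x).card := by
      have h1 := Finset.pred_card_le_card_erase (a := x)
        (s := (G.neighborFinset b).erase a)
      have h2 := Finset.pred_card_le_card_erase (a := a) (s := G.neighborFinset b)
      have h3 := hdeg b
      rw [← G.card_neighborFinset_eq_degree] at h3
      omega
    obtain ⟨c, hc⟩ := Finset.card_pos.mp hcard
    simp only [Finset.mem_erase, SimpleGraph.mem_neighborFinset] at hc
    obtain ⟨hcx, hca, hadj⟩ := hc
    rcases hedges b c hadj with ⟨h1, h2⟩ | ⟨h1, h2⟩ | ⟨h1, h2⟩ | ⟨h1, h2⟩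
    · exact absurd (h1 ▸ hb) haB
    · exact absurd h2 hca
    · exact ⟨c, h2, hcx, hadj⟩
    · exact absurd h1 (Set.disjoint_left.mp hBC hb)
  -- Lemma 2: every c ∈ C has a neighbor in B avoiding any two given vertices
  have lem2 : ∀ c ∈ C, ∀ x y : V, ∃ b ∈ B, b ≠ x ∧ b ≠ y ∧ G.Adj c b := by
    intro c hc x y
    have hcard : 1 ≤ ((G.neighborFinset c).erase x |>.erase y).card := by
      have h1 := Finset.pred_card_le_card_erase (a := y)
        (s := (G.neighborFinset c).erase x)
      have h2 := Finset.pred_card_le_card_erase (a := x) (s := G.neighborFinset c)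
      have h3 := hdeg c
      rw [← G.card_neighborFinset_eq_degree] at h3
      omega
    obtain ⟨b, hb⟩ := Finset.card_pos.mp hcard
    simp only [Finset.mem_erase, SimpleGraph.mem_neighborFinset] at hb
    obtain ⟨hby, hbx, hadj⟩ := hb
    rcases hedges c b hadj with ⟨h1, h2⟩ | ⟨h1, h2⟩ | ⟨h1, h2⟩ | ⟨h1, h2⟩
    · exact absurd (h1 ▸ hc) haC
    · exact absurd h1 (Set.disjoint_right.mp hBC hc)
    · exact absurd h1 (Set.disjoint_right.mp hBC hc)
    · exact ⟨b, h2, hbx, hby, hadj⟩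
  obtain ⟨b1, hb1⟩ := hBne
  obtain ⟨c1, hc1, hc1ne, hadj1⟩ := lem1 b1 hb1 b1
  obtain ⟨b2, hb2, hb2b1, _, hadj2⟩ := lem2 c1 hc1 b1 b1
  obtain ⟨c2, hc2, hc2c1, hadj3⟩ := lem1 b2 hb2 c1
  obtain ⟨b3, hb3, hb3b1, hb3b2, hadj4⟩ := lem2 c2 hc2 b1 b2
  -- distinctness facts
  have hab1 : a ≠ b1 := fun h => haB (h ▸ hb1)
  have hab2 : a ≠ b2 := fun h => haB (h ▸ hb2)
  have hab3 : a ≠ b3 := fun h => haB (h ▸ hb3)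
  have hac1 : a ≠ c1 := fun h => haC (h ▸ hc1)
  have hac2 : a ≠ c2 := fun h => haC (h ▸ hc2)
  have hb1c1 : b1 ≠ c1 := fun h => Set.disjoint_right.mp hBC hc1 (h ▸ hb1)
  have hb1c2 : b1 ≠ c2 := fun h => Set.disjoint_right.mp hBC hc2 (h ▸ hb1)
  have hb2c1 : b2 ≠ c1 := fun h => Set.disjoint_right.mp hBC hc1 (h ▸ hb2)
  have hb2c2 : b2 ≠ c2 := fun h => Set.disjoint_right.mp hBC hc2 (h ▸ hb2)
  have hb3c1 : b3 ≠ c1 := fun h => Set.disjoint_right.mp hBC hc1 (h ▸ hb3)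
  have hb3c2 : b3 ≠ c2 := fun h => Set.disjoint_right.mp hBC hc2 (h ▸ hb3)
  refine ⟨SimpleGraph.Walk.cons (hadjB b1 hb1)
    (SimpleGraph.Walk.cons hadj1
    (SimpleGraph.Walk.cons hadj2
    (SimpleGraph.Walk.cons hadj3
    (SimpleGraph.Walk.cons hadj4
    (SimpleGraph.Walk.cons (hadjB b3 hb3).symm SimpleGraph.Walk.nil))))), ?_, rfl⟩
  simp only [SimpleGraph.Walk.isCycle_def, SimpleGraph.Walk.isTrail_def,
    SimpleGraph.Walk.edges_cons, SimpleGraph.Walk.edges_nil,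
    SimpleGraph.Walk.support_cons, SimpleGraph.Walk.support_nil,
    List.nodup_cons, List.mem_cons, List.not_mem_nil, List.tail,
    Sym2.eq, Sym2.rel_iff', Prod.mk.injEq, Prod.swap_prod_mk, ne_eq,
    not_false_eq_true, List.nodup_nil, and_true]
  refine ⟨?_, ?_⟩ <;> push_neg <;>
  repeat' constructor <;>
  simp_all [eq_comm, Ne.symm] <;> tauto
end

section
/- Let G be a simple graph with vertex classes {a}, B, C (pairwise disjoint) where edges go only between a and B or between B and C, and a is adjacent to every vertex of B. Let n = |V(G)|. If |E(G)| ≥ 3n, then G contains a 6-cycle through a. -/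
lemma build_six_cycle {V : Type*} (G : SimpleGraph V) (a b₁ c₁ b₂ c₂ b₃ : V)
    (hab1 : a ≠ b₁) (hab2 : a ≠ b₂) (hab3 : a ≠ b₃) (hac1 : a ≠ c₁) (hac2 : a ≠ c₂)
    (hb1c1 : b₁ ≠ c₁) (hb1c2 : b₁ ≠ c₂) (hb2c1 : b₂ ≠ c₁) (hb2c2 : b₂ ≠ c₂)
    (hb3c1 : b₃ ≠ c₁) (hb3c2 : b₃ ≠ c₂)
    (hb12 : b₁ ≠ b₂) (hb13 : b₁ ≠ b₃) (hb23 : b₂ ≠ b₃) (hc12 : c₁ ≠ c₂)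
    (e1 : G.Adj a b₁) (e2 : G.Adj b₁ c₁) (e3 : G.Adj c₁ b₂) (e4 : G.Adj b₂ c₂)
    (e5 : G.Adj c₂ b₃) (e6 : G.Adj b₃ a) :
    ∃ w : G.Walk a a, w.IsCycle ∧ w.length = 6 := by
  refine ⟨.cons e1 (.cons e2 (.cons e3 (.cons e4 (.cons e5 (.cons e6 .nil))))), ?_, rfl⟩
  rw [SimpleGraph.Walk.isCycle_def]
  refine ⟨⟨?_⟩, by simp, ?_⟩
  · simp only [SimpleGraph.Walk.edges_cons, SimpleGraph.Walk.edges_nil,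
      List.nodup_cons, List.mem_cons, List.not_mem_nil, or_false, List.nodup_nil, and_true,
      Sym2.eq, Sym2.rel_iff', Prod.mk.injEq, Prod.swap_prod_mk]
    push_neg
    tauto
  · simp only [SimpleGraph.Walk.support_cons, SimpleGraph.Walk.support_nil, List.tail_cons,
      List.nodup_cons, List.mem_cons, List.not_mem_nil, or_false, List.nodup_nil, and_true]
    push_neg
    tauto

theorem six_cycle_through_apex_many_edges {V : Type*} [Fintype V]
    (G : SimpleGraph V) [DecidableRel G.Adj]
    (a : V) (B C : Set V)
    (haB : a ∉ B) (haC : a ∉ C) (hBC : Disjoint B C)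
    (hcover : ∀ v : V, v = a ∨ v ∈ B ∨ v ∈ C)
    (hedges : ∀ u v : V, G.Adj u v →
      (u = a ∧ v ∈ B) ∨ (u ∈ B ∧ v = a) ∨ (u ∈ B ∧ v ∈ C) ∨ (u ∈ C ∧ v ∈ B))
    (hadjB : ∀ b ∈ B, G.Adj a b)
    (hE : 3 * Fintype.card V ≤ G.edgeFinset.card) :
    ∃ w : G.Walk a a, w.IsCycle ∧ w.length = 6 := by
  classical
  -- finset versions
  set Bf : Finset V := Finset.univ.filter (· ∈ B) with hBfdef
  set Cf : Finset V := Finset.univ.filter (· ∈ C) with hCfdef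
  have hmemB : ∀ v, v ∈ Bf ↔ v ∈ B := by intro v; simp [hBfdef]
  have hmemC : ∀ v, v ∈ Cf ↔ v ∈ C := by intro v; simp [hCfdef]
  have haBf : a ∉ Bf := fun h => haB ((hmemB a).1 h)
  have haCf : a ∉ Cf := fun h => haC ((hmemC a).1 h)
  have hBCf : Disjoint Bf Cf := by
    rw [Finset.disjoint_left]
    intro v hv hv'
    exact (hBC.ne_of_mem ((hmemB v).1 hv) ((hmemC v).1 hv')) rfl
  have huniv : (Finset.univ : Finset V) = insert a (Bf ∪ Cf) := by
    ext v
    simp only [Finset.mem_univ, true_iff, Finset.mem_insert, Finset.mem_union, hmemB, hmemC]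
    exact hcover v
  -- adjacency shape
  have hAa : ∀ v, G.Adj a v ↔ v ∈ B := by
    intro v
    constructor
    · intro h
      rcases hedges a v h with ⟨_, hv⟩ | ⟨ha, _⟩ | ⟨ha, _⟩ | ⟨ha, _⟩
      · exact hv
      · exact absurd ha haB
      · exact absurd ha haB
      · exact absurd ha haC
    · exact hadjB v
  -- neighbor sets
  set N : V → Finset V := fun c => Bf.filter (fun b => G.Adj b c) with hNdef
  set M : V → Finset V := fun b => Cf.filter (fun c => G.Adj b c) with hMdef
  have hna : G.neighborFinset a = Bf := by
    ext v
    rw [SimpleGraph.mem_neighborFinset, hAa, hmemB]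
  have hnb : ∀ b ∈ Bf, G.neighborFinset b = insert a (M b) := by
    intro b hb
    have hbB : b ∈ B := (hmemB b).1 hb
    ext v
    simp only [SimpleGraph.mem_neighborFinset, Finset.mem_insert, hMdef, Finset.mem_filter,
      hmemC]
    constructor
    · intro h
      rcases hedges b v h with ⟨hba, _⟩ | ⟨_, hva⟩ | ⟨_, hvC⟩ | ⟨hbC, _⟩
      · exact absurd (hba ▸ hbB) haB
      · exact Or.inl hva
      · exact Or.inr ⟨hvC, h⟩
      · exact absurd rfl (hBC.ne_of_mem hbB hbC)
    · rintro (rfl | ⟨_, h⟩)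
      · exact (hadjB b hbB).symm
      · exact h
  have hnc : ∀ c ∈ Cf, G.neighborFinset c = N c := by
    intro c hc
    have hcC : c ∈ C := (hmemC c).1 hc
    ext v
    simp only [SimpleGraph.mem_neighborFinset, hNdef, Finset.mem_filter, hmemB]
    constructor
    · intro h
      rcases hedges c v h with ⟨hca, _⟩ | ⟨hcB, _⟩ | ⟨hcB, _⟩ | ⟨_, hvB⟩
      · exact absurd (hca ▸ hcC) haC
      · exact absurd rfl (hBC.ne_of_mem hcB hcC)
      · exact absurd rfl (hBC.ne_of_mem hcB hcC)
      · exact ⟨hvB, h.symm⟩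
    · rintro ⟨_, h⟩
      exact h.symm
  -- cardinality of V
  have hcardV : Fintype.card V = 1 + Bf.card + Cf.card := by
    rw [← Finset.card_univ, huniv, Finset.card_insert_of_notMem (by
      simp only [Finset.mem_union]; tauto), Finset.card_union_of_disjoint hBCf]
    ring
  -- sum of degrees
  have hdegsum : ∑ v, G.degree v = 2 * G.edgeFinset.card :=
    SimpleGraph.sum_degrees_eq_twice_card_edges G
  have haMC : a ∉ Bf ∪ Cf := by simp only [Finset.mem_union]; tauto
  have hsplit : ∑ v, G.degree v
      = G.degree a + (∑ b ∈ Bf, G.degree b + ∑ c ∈ Cf, G.degree c) := by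
    rw [huniv, Finset.sum_insert haMC, Finset.sum_union hBCf]
  have hdega : G.degree a = Bf.card := by
    rw [← SimpleGraph.card_neighborFinset_eq_degree, hna]
  have hdegb : ∀ b ∈ Bf, G.degree b = 1 + (M b).card := by
    intro b hb
    rw [← SimpleGraph.card_neighborFinset_eq_degree, hnb b hb,
      Finset.card_insert_of_notMem (fun h => haCf (Finset.mem_filter.1 h).1)]
    ring
  have hdegc : ∀ c ∈ Cf, G.degree c = (N c).card := by
    intro c hc
    rw [← SimpleGraph.card_neighborFinset_eq_degree, hnc c hc]
  -- double counting
  have hswap : ∑ b ∈ Bf, (M b).card = ∑ c ∈ Cf, (N c).card := by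
    simp only [hMdef, hNdef, Finset.card_filter]
    rw [Finset.sum_comm]
  set S : ℕ := ∑ c ∈ Cf, (N c).card with hSdef
  have hStotal : 2 * G.edgeFinset.card = 2 * Bf.card + 2 * S := by
    rw [← hdegsum, hsplit, hdega, Finset.sum_congr rfl hdegb, Finset.sum_congr rfl hdegc,
      Finset.sum_add_distrib, Finset.sum_const, hswap, ← hSdef]
    simp only [smul_eq_mul, mul_one]
    ring
  have hSlower : 3 + 2 * Bf.card + 3 * Cf.card ≤ S := by
    have h6 : 6 * Fintype.card V ≤ 2 * G.edgeFinset.card := by omega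
    rw [hcardV] at h6
    omega
  -- find the configuration
  have key : ∃ b₁ ∈ Bf, ∃ b₂ ∈ Bf, ∃ b₃ ∈ Bf, ∃ c₁ ∈ Cf, ∃ c₂ ∈ Cf,
      b₁ ≠ b₂ ∧ b₁ ≠ b₃ ∧ b₂ ≠ b₃ ∧ c₁ ≠ c₂ ∧
      G.Adj b₁ c₁ ∧ G.Adj b₂ c₁ ∧ G.Adj b₂ c₂ ∧ G.Adj b₃ c₂ := by
    by_contra hno
    push_neg at hno
    set C3 : Finset V := Cf.filter (fun c => 3 ≤ (N c).card) with hC3def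
    have hC3sub : C3 ⊆ Cf := Finset.filter_subset _ _
    have hdisj : ∀ c ∈ C3, ∀ c' ∈ C3, c ≠ c' → Disjoint (N c) (N c') := by
      intro c hc c' hc' hne
      rw [Finset.disjoint_left]
      intro b hb hb'
      have hc3 : 3 ≤ (N c).card := (Finset.mem_filter.1 hc).2
      have hc3' : 3 ≤ (N c').card := (Finset.mem_filter.1 hc').2
      -- pick b₁ ∈ N c, b₁ ≠ b
      have h1 : ((N c).erase b).Nonempty := by
        rw [← Finset.card_pos]
        have := Finset.pred_card_le_card_erase (s := N c) (a := b)
        omega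
      obtain ⟨b₁, hb₁⟩ := h1
      have hb₁Nc : b₁ ∈ N c := Finset.mem_of_mem_erase hb₁
      have hb₁b : b₁ ≠ b := Finset.ne_of_mem_erase hb₁
      -- pick b₃ ∈ N c', b₃ ∉ {b, b₁}
      have h2 : (((N c').erase b).erase b₁).Nonempty := by
        rw [← Finset.card_pos]
        have h3 := Finset.pred_card_le_card_erase (s := N c') (a := b)
        have h4 := Finset.pred_card_le_card_erase (s := (N c').erase b) (a := b₁)
        omega
      obtain ⟨b₃, hb₃⟩ := h2
      have hb₃Nc' : b₃ ∈ N c' := Finset.mem_of_mem_erase (Finset.mem_of_mem_erase hb₃)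
      have hb₃b₁ : b₃ ≠ b₁ := Finset.ne_of_mem_erase hb₃
      have hb₃b : b₃ ≠ b := Finset.ne_of_mem_erase (Finset.mem_of_mem_erase hb₃)
      have hmb₁ := Finset.mem_filter.1 hb₁Nc
      have hmb := Finset.mem_filter.1 hb
      have hmb' := Finset.mem_filter.1 hb'
      have hmb₃ := Finset.mem_filter.1 hb₃Nc'
      exact hno b₁ hmb₁.1 b hmb.1 b₃ hmb₃.1 c (hC3sub hc) c' (hC3sub hc') hb₁b
        hb₃b₁.symm hb₃b.symm hne hmb₁.2 hmb.2 hmb'.2 hmb₃.2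
    -- counting contradiction
    have hS3 : ∑ c ∈ C3, (N c).card ≤ Bf.card := by
      rw [← Finset.card_biUnion hdisj]
      apply Finset.card_le_card
      intro b hb
      obtain ⟨c, _, hbc⟩ := Finset.mem_biUnion.1 hb
      exact (Finset.mem_filter.1 hbc).1
    have hSrest : ∑ c ∈ Cf.filter (fun c => ¬ 3 ≤ (N c).card), (N c).card
        ≤ 2 * Cf.card := by
      calc ∑ c ∈ Cf.filter (fun c => ¬ 3 ≤ (N c).card), (N c).card
          ≤ ∑ _c ∈ Cf.filter (fun c => ¬ 3 ≤ (N c).card), 2 := by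
            apply Finset.sum_le_sum
            intro c hc
            have := (Finset.mem_filter.1 hc).2
            omega
        _ = 2 * (Cf.filter (fun c => ¬ 3 ≤ (N c).card)).card := by
            rw [Finset.sum_const]; ring
        _ ≤ 2 * Cf.card := by
            have := Finset.card_filter_le Cf (fun c => ¬ 3 ≤ (N c).card)
            omega
    have hSsplit : S = ∑ c ∈ C3, (N c).card
        + ∑ c ∈ Cf.filter (fun c => ¬ 3 ≤ (N c).card), (N c).card := by
      rw [hSdef, hC3def, ← Finset.sum_filter_add_sum_filter_not Cf (fun c => 3 ≤ (N c).card)]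
    omega
  -- build the cycle
  obtain ⟨b₁, hb₁, b₂, hb₂, b₃, hb₃, c₁, hc₁, c₂, hc₂, h12, h13, h23, hc12,
    e2, e3, e4, e5⟩ := key
  have hb₁B : b₁ ∈ B := (hmemB b₁).1 hb₁
  have hb₂B : b₂ ∈ B := (hmemB b₂).1 hb₂
  have hb₃B : b₃ ∈ B := (hmemB b₃).1 hb₃
  have hc₁C : c₁ ∈ C := (hmemC c₁).1 hc₁
  have hc₂C : c₂ ∈ C := (hmemC c₂).1 hc₂
  exact build_six_cycle G a b₁ c₁ b₂ c₂ b₃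
    (fun h => haB (h ▸ hb₁B)) (fun h => haB (h ▸ hb₂B)) (fun h => haB (h ▸ hb₃B))
    (fun h => haC (h ▸ hc₁C)) (fun h => haC (h ▸ hc₂C))
    (hBC.ne_of_mem hb₁B hc₁C) (hBC.ne_of_mem hb₁B hc₂C)
    (hBC.ne_of_mem hb₂B hc₁C) (hBC.ne_of_mem hb₂B hc₂C)
    (hBC.ne_of_mem hb₃B hc₁C) (hBC.ne_of_mem hb₃B hc₂C)
    h12 h13 h23 hc12
    (hadjB b₁ hb₁B) e2 e3.symm e4 e5.symm ((hadjB b₃ hb₃B).symm)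
end

section
/- Let G be a simple graph with disjoint vertex subsets {a}, B, C, where edges go only between a and B or between B and C, and a is adjacent to every vertex of B. Let n = |V(G)| and suppose |E(G)| ≥ 3n + k for some natural number k. Then G contains at least k distinct 6-cycles through a (distinct as edge sets). -/
open Finset SimpleGraph

open Finset

lemma double_count {V : Type*} [DecidableEq V] (G : SimpleGraph V) [DecidableRel G.Adj]
    (B C : Finset V) :
    ∑ b ∈ B, (C.filter (fun c => G.Adj b c)).card
      = ∑ c ∈ C, (B.filter (fun b => G.Adj b c)).card := by
  simp only [Finset.card_filter]
  exact Finset.sum_comm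

lemma exists_bip_path {V : Type*} [DecidableEq V] (G : SimpleGraph V) [DecidableRel G.Adj] :
    ∀ (n : ℕ) (B C : Finset V), B.card + C.card ≤ n →
    2 * B.card + 3 * C.card + 1 ≤ ∑ b ∈ B, (C.filter (fun c => G.Adj b c)).card →
    ∃ b1 c1 b2 c2 b3, b1 ∈ B ∧ b2 ∈ B ∧ b3 ∈ B ∧ c1 ∈ C ∧ c2 ∈ C ∧
      b1 ≠ b2 ∧ b1 ≠ b3 ∧ b2 ≠ b3 ∧ c1 ≠ c2 ∧
      G.Adj b1 c1 ∧ G.Adj b2 c1 ∧ G.Adj b2 c2 ∧ G.Adj b3 c2 := by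
  intro n
  induction n with
  | zero =>
    intro B C hn hm
    have hB : B = ∅ := by rw [← Finset.card_eq_zero]; omega
    subst hB
    simp only [Finset.sum_empty] at hm
    omega
  | succ n ih =>
    intro B C hn hm
    by_cases h1 : ∃ b ∈ B, (C.filter (fun c => G.Adj b c)).card ≤ 1
    · obtain ⟨b, hb, hdeg⟩ := h1
      have hsum : ∑ x ∈ B.erase b, (C.filter (fun c => G.Adj x c)).card
          = (∑ x ∈ B, (C.filter (fun c => G.Adj x c)).card) - (C.filter (fun c => G.Adj b c)).card := by
        rw [← Finset.add_sum_erase _ _ hb]; omega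
      have hcard : (B.erase b).card = B.card - 1 := Finset.card_erase_of_mem hb
      have hBpos : 1 ≤ B.card := Finset.card_pos.mpr ⟨b, hb⟩
      obtain ⟨b1, c1, b2, c2, b3, h1, h2, h3, rest⟩ :=
        ih (B.erase b) C (by omega) (by rw [hsum]; omega)
      exact ⟨b1, c1, b2, c2, b3, Finset.mem_of_mem_erase h1, Finset.mem_of_mem_erase h2,
        Finset.mem_of_mem_erase h3, rest⟩
    · push_neg at h1
      rw [double_count] at hm
      by_cases h2 : ∃ c ∈ C, (B.filter (fun b => G.Adj b c)).card ≤ 2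
      · obtain ⟨c, hc, hdeg⟩ := h2
        have hsum : ∑ x ∈ C.erase c, (B.filter (fun b => G.Adj b x)).card
            = (∑ x ∈ C, (B.filter (fun b => G.Adj b x)).card) - (B.filter (fun b => G.Adj b c)).card := by
          rw [← Finset.add_sum_erase _ _ hc]; omega
        have hcard : (C.erase c).card = C.card - 1 := Finset.card_erase_of_mem hc
        have hCpos : 1 ≤ C.card := Finset.card_pos.mpr ⟨c, hc⟩
        obtain ⟨b1, c1, b2, c2, b3, h1, h2, h3, h4, h5, rest⟩ :=
          ih B (C.erase c) (by omega) (by rw [double_count, hsum]; omega)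
        exact ⟨b1, c1, b2, c2, b3, h1, h2, h3, Finset.mem_of_mem_erase h4,
          Finset.mem_of_mem_erase h5, rest⟩
      · push_neg at h2
        -- all b have deg ≥ 2, all c have deg ≥ 3
        have hBne : B.Nonempty := by
          by_contra h
          rw [Finset.not_nonempty_iff_eq_empty] at h
          subst h
          simp at hm
        obtain ⟨b1, hb1⟩ := hBne
        have hd1 : 2 ≤ (C.filter (fun c => G.Adj b1 c)).card := h1 b1 hb1
        obtain ⟨c1, hc1⟩ : (C.filter (fun c => G.Adj b1 c)).Nonempty :=
          Finset.card_pos.mp (by omega)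
        rw [Finset.mem_filter] at hc1
        have hd2 : 3 ≤ (B.filter (fun b => G.Adj b c1)).card := h2 c1 hc1.1
        obtain ⟨b2, hb2⟩ : ((B.filter (fun b => G.Adj b c1)).erase b1).Nonempty := by
          apply Finset.card_pos.mp
          have := Finset.pred_card_le_card_erase (s := B.filter (fun b => G.Adj b c1)) (a := b1)
          omega
        have hb2' := Finset.mem_of_mem_erase hb2
        rw [Finset.mem_filter] at hb2'
        have hne12 : b2 ≠ b1 := Finset.ne_of_mem_erase hb2
        have hd3 : 2 ≤ (C.filter (fun c => G.Adj b2 c)).card := h1 b2 hb2'.1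
        obtain ⟨c2, hc2⟩ : ((C.filter (fun c => G.Adj b2 c)).erase c1).Nonempty := by
          apply Finset.card_pos.mp
          have := Finset.pred_card_le_card_erase (s := C.filter (fun c => G.Adj b2 c)) (a := c1)
          omega
        have hc2' := Finset.mem_of_mem_erase hc2
        rw [Finset.mem_filter] at hc2'
        have hnec : c2 ≠ c1 := Finset.ne_of_mem_erase hc2
        have hd4 : 3 ≤ (B.filter (fun b => G.Adj b c2)).card := h2 c2 hc2'.1
        obtain ⟨b3, hb3⟩ : (((B.filter (fun b => G.Adj b c2)).erase b1).erase b2).Nonempty := by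
          apply Finset.card_pos.mp
          have h1' : (B.filter (fun b => G.Adj b c2)).card - 1
              ≤ ((B.filter (fun b => G.Adj b c2)).erase b1).card := Finset.pred_card_le_card_erase
          have h2' : ((B.filter (fun b => G.Adj b c2)).erase b1).card - 1
              ≤ (((B.filter (fun b => G.Adj b c2)).erase b1).erase b2).card :=
            Finset.pred_card_le_card_erase
          omega
        have hb3a := Finset.mem_of_mem_erase hb3
        have hne23 : b3 ≠ b2 := Finset.ne_of_mem_erase hb3
        have hne13 : b3 ≠ b1 := Finset.ne_of_mem_erase hb3a
        have hb3' := Finset.mem_of_mem_erase hb3a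
        rw [Finset.mem_filter] at hb3'
        exact ⟨b1, c1, b2, c2, b3, hb1, hb2'.1, hb3'.1, hc1.1, hc2'.1,
          hne12.symm, hne13.symm, hne23.symm, hnec.symm,
          hc1.2, hb2'.2, hc2'.2, hb3'.2⟩

set_option maxHeartbeats 1000000 in
lemma exists_six_cycle {V : Type*} [Fintype V] [DecidableEq V]
    (G : SimpleGraph V) [DecidableRel G.Adj]
    (a : V) (B C : Set V)
    (haB : a ∉ B) (haC : a ∉ C) (hBC : Disjoint B C)
    (hedges : ∀ u v : V, G.Adj u v →
      (u = a ∧ v ∈ B) ∨ (u ∈ B ∧ v = a) ∨ (u ∈ B ∧ v ∈ C) ∨ (u ∈ C ∧ v ∈ B))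
    (hadjB : ∀ b ∈ B, G.Adj a b)
    (hE : 3 * Fintype.card V + 1 ≤ G.edgeFinset.card) :
    ∃ (b c : V) (w : G.Walk a a), b ∈ B ∧ c ∈ C ∧ w.IsCycle ∧ w.length = 6 ∧
      s(b, c) ∈ w.edges := by
  classical
  set B' := B.toFinset with hB'
  set C' := C.toFinset with hC'
  -- vertex count
  have hvert : B'.card + C'.card + 1 ≤ Fintype.card V := by
    have hd1 : Disjoint B' C' := by
      rw [Finset.disjoint_left]
      intro x hx hx'
      rw [hB', Set.mem_toFinset] at hx
      rw [hC', Set.mem_toFinset] at hx'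
      exact (Set.disjoint_left.mp hBC hx) hx'
    have hd2 : a ∉ B' ∪ C' := by
      simp only [Finset.mem_union, hB', hC', Set.mem_toFinset]
      tauto
    calc B'.card + C'.card + 1 = (insert a (B' ∪ C')).card := by
          rw [Finset.card_insert_of_notMem hd2, Finset.card_union_of_disjoint hd1]
      _ ≤ Fintype.card V := Finset.card_le_univ _
  -- edge count
  have hEc : G.edgeFinset.card ≤ B'.card +
      ∑ b ∈ B', (C'.filter (fun c => G.Adj b c)).card := by
    have hsub : G.edgeFinset ⊆ B'.image (fun b => s(a, b)) ∪
        (((B' ×ˢ C').filter (fun p => G.Adj p.1 p.2)).image (fun p => s(p.1, p.2))) := by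
      intro e he
      rw [mem_edgeFinset] at he
      induction e with
      | _ u v =>
        rw [mem_edgeSet] at he
        rcases hedges u v he with ⟨hu, hv⟩ | ⟨hu, hv⟩ | ⟨hu, hv⟩ | ⟨hu, hv⟩
        · subst hu
          exact Finset.mem_union_left _ (Finset.mem_image_of_mem _ (by simpa [hB']))
        · subst hv
          apply Finset.mem_union_left
          rw [Sym2.eq_swap]
          exact Finset.mem_image_of_mem _ (by simpa [hB'])
        · apply Finset.mem_union_right
          exact Finset.mem_image_of_mem (a := (u, v)) _ (by
            simp [Finset.mem_filter, Finset.mem_product, hB', hC', hu, hv, he])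
        · apply Finset.mem_union_right
          rw [Sym2.eq_swap]
          have hmem : ((v, u) : V × V) ∈ (B' ×ˢ C').filter (fun p => G.Adj p.1 p.2) := by
            simp [Finset.mem_filter, Finset.mem_product, hB', hC', hu, hv, he.symm]
          exact Finset.mem_image_of_mem _ hmem
    have hprod : ((B' ×ˢ C').filter (fun p => G.Adj p.1 p.2)).card
        = ∑ b ∈ B', (C'.filter (fun c => G.Adj b c)).card := by
      simp only [Finset.card_filter]
      rw [Finset.sum_product]
    calc G.edgeFinset.card ≤ (B'.image (fun b => s(a, b))).card +
          ((((B' ×ˢ C').filter (fun p => G.Adj p.1 p.2)).image (fun p => s(p.1, p.2)))).card :=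
          le_trans (Finset.card_le_card hsub) (Finset.card_union_le _ _)
      _ ≤ B'.card + ∑ b ∈ B', (C'.filter (fun c => G.Adj b c)).card := by
          rw [← hprod]
          exact Nat.add_le_add (Finset.card_image_le) (Finset.card_image_le)
  have hm : 2 * B'.card + 3 * C'.card + 1 ≤ ∑ b ∈ B', (C'.filter (fun c => G.Adj b c)).card := by
    omega
  obtain ⟨b1, c1, b2, c2, b3, hb1, hb2, hb3, hc1, hc2, h12, h13, h23, hcc, e1, e2, e3, e4⟩ :=
    exists_bip_path G (B'.card + C'.card) B' C' le_rfl hm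
  rw [hB', Set.mem_toFinset] at hb1 hb2 hb3
  rw [hC', Set.mem_toFinset] at hc1 hc2
  -- distinctness facts
  have hab1 : a ≠ b1 := fun h => haB (h ▸ hb1)
  have hab2 : a ≠ b2 := fun h => haB (h ▸ hb2)
  have hab3 : a ≠ b3 := fun h => haB (h ▸ hb3)
  have hac1 : a ≠ c1 := fun h => haC (h ▸ hc1)
  have hac2 : a ≠ c2 := fun h => haC (h ▸ hc2)
  have hbc : ∀ x ∈ B, ∀ y ∈ C, x ≠ y := fun x hx y hy h =>
    (Set.disjoint_left.mp hBC hx) (h ▸ hy)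
  have h11 : b1 ≠ c1 := hbc _ hb1 _ hc1
  have h1c2 : b1 ≠ c2 := hbc _ hb1 _ hc2
  have h2c1 : b2 ≠ c1 := hbc _ hb2 _ hc1
  have h2c2 : b2 ≠ c2 := hbc _ hb2 _ hc2
  have h3c1 : b3 ≠ c1 := hbc _ hb3 _ hc1
  have h3c2 : b3 ≠ c2 := hbc _ hb3 _ hc2
  let w : G.Walk a a :=
    .cons (hadjB b1 hb1) (.cons e1 (.cons e2.symm (.cons e3 (.cons e4.symm
      (.cons (hadjB b3 hb3).symm .nil)))))
  refine ⟨b1, c1, w, hb1, hc1, ?_, by simp [w], by simp [w]⟩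
  rw [SimpleGraph.Walk.isCycle_def]
  refine ⟨?_, by simp [w], ?_⟩
  · rw [SimpleGraph.Walk.isTrail_def]
    simp only [w, SimpleGraph.Walk.edges_cons, SimpleGraph.Walk.edges_nil,
      List.nodup_cons, List.mem_cons, List.not_mem_nil, or_false, List.nodup_nil, and_true,
      Sym2.eq, Sym2.rel_iff', Prod.mk.injEq, Prod.swap_prod_mk]
    push_neg
    tauto
  · simp only [w, SimpleGraph.Walk.support_cons, SimpleGraph.Walk.support_nil,
      List.tail_cons, List.nodup_cons, List.mem_cons, List.not_mem_nil, or_false,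
      List.nodup_nil, and_true, List.mem_singleton]
    push_neg
    tauto

lemma mapLe_edges {V : Type*} {G G' : SimpleGraph V} (hle : G' ≤ G) {u : V}
    (w' : G'.Walk u u) : (w'.mapLe hle).edges = w'.edges := by
  have hid : ⇑(SimpleGraph.Hom.ofLE hle) = id := rfl
  simp [SimpleGraph.Walk.mapLe, SimpleGraph.Walk.edges_map, hid, Sym2.map_id]

lemma mapLe_length {V : Type*} {G G' : SimpleGraph V} (hle : G' ≤ G) {u : V}
    (w' : G'.Walk u u) : (w'.mapLe hle).length = w'.length := by
  simp [SimpleGraph.Walk.mapLe]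

lemma main_aux {V : Type*} [Fintype V] [DecidableEq V]
    (a : V) (B C : Set V)
    (haB : a ∉ B) (haC : a ∉ C) (hBC : Disjoint B C)
    (k : ℕ) (G : SimpleGraph V) [inst : DecidableRel G.Adj]
    (hedges : ∀ u v : V, G.Adj u v →
      (u = a ∧ v ∈ B) ∨ (u ∈ B ∧ v = a) ∨ (u ∈ B ∧ v ∈ C) ∨ (u ∈ C ∧ v ∈ B))
    (hadjB : ∀ b ∈ B, G.Adj a b)
    (hE : 3 * Fintype.card V + k ≤ G.edgeFinset.card) :
    ∃ S : Finset (Finset (Sym2 V)), k ≤ S.card ∧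
      ∀ es ∈ S, ∃ w : G.Walk a a, w.IsCycle ∧ w.length = 6 ∧
        w.edges.toFinset = es := by
  induction k generalizing G inst with
  | zero =>
    exact ⟨∅, by simp, by simp⟩
  | succ k ih =>
    obtain ⟨b, c, w, hb, hc, hcyc, hlen, hbcw⟩ :=
      exists_six_cycle G a B C haB haC hBC hedges hadjB (by omega)
    set G' : SimpleGraph V := G.deleteEdges {s(b, c)} with hG'
    haveI instG' : DecidableRel G'.Adj := fun u v =>
      decidable_of_iff (G.Adj u v ∧ ¬ s(u, v) = s(b, c))
        (by rw [hG', SimpleGraph.deleteEdges_adj]; simp)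
    have hle : G' ≤ G := SimpleGraph.deleteEdges_le _
    have hbcE : s(b, c) ∈ G.edgeFinset := by
      rw [SimpleGraph.mem_edgeFinset]
      exact w.edges_subset_edgeSet hbcw
    have hEF : G'.edgeFinset = G.edgeFinset.erase s(b, c) := by
      ext e
      simp only [SimpleGraph.mem_edgeFinset, hG', SimpleGraph.edgeSet_deleteEdges,
        Set.mem_diff, Set.mem_singleton_iff, Finset.mem_erase, SimpleGraph.mem_edgeFinset]
      tauto
    have hcard' : 3 * Fintype.card V + k ≤ G'.edgeFinset.card := by
      rw [hEF, Finset.card_erase_of_mem hbcE]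
      omega
    have hedges' : ∀ u v : V, G'.Adj u v →
        (u = a ∧ v ∈ B) ∨ (u ∈ B ∧ v = a) ∨ (u ∈ B ∧ v ∈ C) ∨ (u ∈ C ∧ v ∈ B) :=
      fun u v h => hedges u v (hle h)
    have hadjB' : ∀ b' ∈ B, G'.Adj a b' := by
      intro b' hb'
      rw [hG', SimpleGraph.deleteEdges_adj]
      refine ⟨hadjB b' hb', ?_⟩
      simp only [Set.mem_singleton_iff, Sym2.eq, Sym2.rel_iff', Prod.mk.injEq,
        Prod.swap_prod_mk]
      rintro (⟨rfl, rfl⟩ | ⟨rfl, rfl⟩)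
      · exact haB hb
      · exact haC hc
    obtain ⟨S, hScard, hS⟩ := ih G' hedges' hadjB' hcard'
    have hnotmem : w.edges.toFinset ∉ S := by
      intro hmem
      obtain ⟨w', _, _, hw'⟩ := hS _ hmem
      have : s(b, c) ∈ w'.edges := by
        rw [← List.mem_toFinset, hw', List.mem_toFinset]
        exact hbcw
      have := w'.edges_subset_edgeSet this
      rw [hG', SimpleGraph.edgeSet_deleteEdges] at this
      simp at this
    refine ⟨insert w.edges.toFinset S, ?_, ?_⟩
    · rw [Finset.card_insert_of_notMem hnotmem]; omega
    · intro es hes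
      rcases Finset.mem_insert.mp hes with rfl | hes
      · exact ⟨w, hcyc, hlen, rfl⟩
      · obtain ⟨w', hcyc', hlen', hw'⟩ := hS _ hes
        refine ⟨w'.mapLe hle, hcyc'.mapLe hle, ?_, ?_⟩
        · rw [mapLe_length hle w', hlen']
        · rw [mapLe_edges hle w', hw']

set_option maxHeartbeats 1000000 in
theorem many_six_cycles_through_apex {V : Type*} [Fintype V] [DecidableEq V]
    (G : SimpleGraph V) [DecidableRel G.Adj]
    (a : V) (B C : Set V)
    (haB : a ∉ B) (haC : a ∉ C) (hBC : Disjoint B C)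
    (hcover : ∀ v : V, v = a ∨ v ∈ B ∨ v ∈ C)
    (hedges : ∀ u v : V, G.Adj u v →
      (u = a ∧ v ∈ B) ∨ (u ∈ B ∧ v = a) ∨ (u ∈ B ∧ v ∈ C) ∨ (u ∈ C ∧ v ∈ B))
    (hadjB : ∀ b ∈ B, G.Adj a b)
    (k : ℕ) (hE : 3 * Fintype.card V + k ≤ G.edgeFinset.card) :
    ∃ S : Finset (Finset (Sym2 V)), k ≤ S.card ∧
      ∀ es ∈ S, ∃ w : G.Walk a a, w.IsCycle ∧ w.length = 6 ∧
        w.edges.toFinset = es := by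
  exact main_aux a B C haB haC hBC k G hedges hadjB hE
end
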